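/- The set of codes of ℵ₁-trees on ω₁ is an ω₁-Borel subset of 2^{ω₁}. -/

import Mathlib

noncomputable section

open Set

/-- The ordinal `ω₁`. -/
abbrev omega1Ord : Ordinal := (Cardinal.aleph 1).ord

/-- `ω₁`, the first uncountable ordinal, as a type. -/
abbrev Omega1 : Type := omega1Ord.ToType

open Classical in
/-- The height of a node `b` in the tree given by the strict order `r`:
the order type of the set of `r`-predecessors of `b`. -/
noncomputable def treeHeight {α : Type} (r : α → α → Prop) (b : α) : Ordinal :=
  if h : IsWellOrder {a // r a b} (fun x y => r x.1 y.1) then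
    @Ordinal.type {a // r a b} (fun x y => r x.1 y.1) h
  else 0

/-- The level `ξ` of the tree given by `r`: the set of nodes of height `ξ`. -/
def treeLevel {α : Type} (r : α → α → Prop) (ξ : Ordinal) : Set α :=
  {b | treeHeight r b = ξ}

/-- `r` is a (strict) tree order: it is transitive and irreflexive, and the set of
predecessors of any node is well-ordered by `r`. -/
structure IsTreeOrder {α : Type} (r : α → α → Prop) : Prop where
  trans : ∀ a b c, r a b → r b c → r a c
  irrefl : ∀ a, ¬ r a a
  pred_trichot : ∀ a b c, r a c → r b c → (r a b ∨ a = b ∨ r b a)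
  pred_wellOrdered : ∀ c, ∀ S : Set α, (∀ a ∈ S, r a c) → S.Nonempty →
    ∃ m ∈ S, ∀ a ∈ S, m = a ∨ r m a

/-- An `ℵ₁`-tree on `ω₁`: a tree order all of whose levels are countable,
with the levels below `ω₁` nonempty and the levels from `ω₁` onwards empty. -/
structure IsAleph1Tree (r : Omega1 → Omega1 → Prop) : Prop where
  toIsTreeOrder : IsTreeOrder r
  level_countable : ∀ ξ : Ordinal, (treeLevel r ξ).Countable
  level_nonempty : ∀ ξ : Ordinal, ξ < omega1Ord → (treeLevel r ξ).Nonempty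
  level_empty_of_ge : ∀ ξ : Ordinal, omega1Ord ≤ ξ → treeLevel r ξ = ∅

/-- `t` is an immediate successor of `s`. -/
def ImmSucc {α : Type} (r : α → α → Prop) (s t : α) : Prop :=
  r s t ∧ ¬ ∃ u, r s u ∧ r u t

/-- A regular tree on `ω₁`: an `ℵ₁`-tree which is rooted, in which every node has
at least two immediate successors, and which is pruned. -/
structure IsRegularTree (r : Omega1 → Omega1 → Prop) : Prop where
  toIsAleph1Tree : IsAleph1Tree r
  rooted : ∃ rt, ∀ a, a = rt ∨ r rt a
  binBranching : ∀ s, ∃ t₁ t₂, t₁ ≠ t₂ ∧ ImmSucc r s t₁ ∧ ImmSucc r s t₂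
  pruned : ∀ s, ∀ γ : Ordinal, treeHeight r s < γ → γ < omega1Ord →
    ∃ t, r s t ∧ treeHeight r t = γ

/-- `c` is a chain with respect to `r`. -/
def IsChainIn {α : Type} (r : α → α → Prop) (c : Set α) : Prop :=
  ∀ a ∈ c, ∀ b ∈ c, a = b ∨ r a b ∨ r b a

/-- `c` is an antichain with respect to `r`. -/
def IsAntichainIn {α : Type} (r : α → α → Prop) (c : Set α) : Prop :=
  ∀ a ∈ c, ∀ b ∈ c, a ≠ b → ¬ r a b ∧ ¬ r b a

/-- A branch: a maximal chain. -/
def IsBranchIn {α : Type} (r : α → α → Prop) (c : Set α) : Prop :=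
  IsChainIn r c ∧ ∀ c', IsChainIn r c' → c ⊆ c' → c = c'

/-- An Aronszajn tree: an `ℵ₁`-tree with no uncountable chain. -/
def IsAronszajnTree (r : Omega1 → Omega1 → Prop) : Prop :=
  IsAleph1Tree r ∧ ∀ c : Set Omega1, IsChainIn r c → c.Countable

/-- A Suslin tree: an Aronszajn tree with no uncountable antichain. -/
def IsSuslinTree (r : Omega1 → Omega1 → Prop) : Prop :=
  IsAronszajnTree r ∧ ∀ c : Set Omega1, IsAntichainIn r c → c.Countable

/-- A special Aronszajn tree: an Aronszajn tree which is the union of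
countably many antichains. -/
def IsSpecialAronszajnTree (r : Omega1 → Omega1 → Prop) : Prop :=
  IsAronszajnTree r ∧
    ∃ A : ℕ → Set Omega1, (∀ n, IsAntichainIn r (A n)) ∧ (⋃ n, A n) = Set.univ

/-- A Kurepa tree: an `ℵ₁`-tree with at least `ℵ₂` uncountable branches. -/
def IsKurepaTree (r : Omega1 → Omega1 → Prop) : Prop :=
  IsAleph1Tree r ∧
    Cardinal.aleph 2 ≤ Cardinal.mk {c : Set Omega1 // IsBranchIn r c ∧ ¬ c.Countable}

/-- A fixed bijection `ω₁ × ω₁ ≃ ω₁`. -/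
def pairEquiv : Omega1 × Omega1 ≃ Omega1 := Classical.choice <| by
  rw [← Cardinal.eq]
  have h1 : Cardinal.mk Omega1 = Cardinal.aleph 1 := by
    rw [Cardinal.mk_toType, Cardinal.card_ord]
  simp only [Cardinal.mk_prod, Cardinal.lift_id, h1]
  exact Cardinal.mul_eq_self (Cardinal.aleph0_le_aleph 1)

/-- The tree relation on `ω₁` coded by `x : 2^{ω₁}` via the fixed pairing bijection. -/
def codedRel (x : Omega1 → Bool) : Omega1 → Omega1 → Prop :=
  fun a b => x (pairEquiv (a, b)) = true

/-- `x` is a code of a regular tree on `ω₁`. -/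
def IsRegularTreeCode (x : Omega1 → Bool) : Prop := IsRegularTree (codedRel x)

/-! ### The generalized Baire space topology -/

/-- The basic open set `[p]` determined by a partial function `p`. -/
def gbsBasic {I X : Type} (p : I → Option X) : Set (I → X) :=
  {x | ∀ i : I, ∀ y : X, p i = some y → x i = y}

/-- `p` is a countable partial function, i.e. it has countable support. -/
def CtblSupp {I X : Type} (p : I → Option X) : Prop :=
  {i | p i ≠ none}.Countable

/-- The topology on `X^I` generated by the sets `[p]` for countable partial
functions `p`. -/
def gbsTop (I X : Type) : TopologicalSpace (I → X) :=
  TopologicalSpace.generateFrom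
    {s | ∃ p : I → Option X, CtblSupp p ∧ s = gbsBasic p}

/-- The `ω₁`-Borel subsets of a topological space: the smallest family containing
the open sets and closed under complements and unions of `ℵ₁`-many sets. -/
inductive IsOmega1Borel {β : Type} (t : TopologicalSpace β) : Set β → Prop
  | basic (s : Set β) : t.IsOpen s → IsOmega1Borel t s
  | compl (s : Set β) : IsOmega1Borel t s → IsOmega1Borel t sᶜ
  | iUnion (f : Omega1 → Set β) : (∀ i, IsOmega1Borel t (f i)) →
      IsOmega1Borel t (⋃ i, f i)

/-- `A` is `Π¹₁`: there is an open `B ⊆ β × ω₁^{ω₁}` with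
`x ∈ A ↔ ∀ g, (x, g) ∈ B`. -/
def IsPi11 {β : Type} (t : TopologicalSpace β) (A : Set β) : Prop :=
  ∃ B : Set (β × (Omega1 → Omega1)),
    (@instTopologicalSpaceProd β (Omega1 → Omega1) t (gbsTop Omega1 Omega1)).IsOpen B ∧
    ∀ x, x ∈ A ↔ ∀ g : Omega1 → Omega1, (x, g) ∈ B

/-- `A` is `Σ¹₁`: its complement is `Π¹₁`. -/
def IsSigma11 {β : Type} (t : TopologicalSpace β) (A : Set β) : Prop :=
  IsPi11 t Aᶜ

/-- `A` is `Δ¹₁`: both `Σ¹₁` and `Π¹₁`. -/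
def IsDelta11 {β : Type} (t : TopologicalSpace β) (A : Set β) : Prop :=
  IsPi11 t A ∧ IsSigma11 t A

/-! ### Meagerness and the Baire property -/

/-- `s` is nowhere dense with respect to the topology `t`. -/
def IsNwdIn {β : Type} (t : TopologicalSpace β) (s : Set β) : Prop :=
  @interior β t (@closure β t s) = ∅

/-- `s` is (`ω₁`-)meager: it is covered by `ℵ₁`-many nowhere dense sets. -/
def IsOmega1Meager {β : Type} (t : TopologicalSpace β) (s : Set β) : Prop :=
  ∃ f : Omega1 → Set β, (∀ i, IsNwdIn t (f i)) ∧ s ⊆ ⋃ i, f i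

/-- `s` has the Baire property: its symmetric difference with some open set is meager. -/
def HasBaireProperty {β : Type} (t : TopologicalSpace β) (s : Set β) : Prop :=
  ∃ o : Set β, t.IsOpen o ∧ IsOmega1Meager t ((s \ o) ∪ (o \ s))

/-! ### The space of regular trees -/

/-- The space of (codes of) regular trees on `ω₁`. -/
abbrev RegTreeSpace : Type := {x : Omega1 → Bool // IsRegularTreeCode x}

/-- The subspace topology on the space of regular trees. -/
def regTreeTop : TopologicalSpace RegTreeSpace :=
  TopologicalSpace.induced (fun z => z.1) (gbsTop Omega1 Bool)

/-- The trace of the basic open set `[p]` on the space of regular trees. -/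
def regTreeBasic (p : Omega1 → Option Bool) : Set RegTreeSpace :=
  {z | z.1 ∈ gbsBasic p}

/-- Two tree relations on `ω₁` are isomorphic. -/
def TreeIso (r r' : Omega1 → Omega1 → Prop) : Prop :=
  ∃ e : Omega1 ≃ Omega1, ∀ a b, r a b ↔ r' (e a) (e b)

/-! ### Clubs, stationary sets and diamonds -/

/-- `C ⊆ ω₁` is club: it is unbounded and contains all of its limit points. -/
def IsClubIn (C : Set Omega1) : Prop :=
  (∀ a : Omega1, ∃ b ∈ C, a < b) ∧
  (∀ a : Omega1, (∃ b, b < a) → (∀ b, b < a → ∃ c ∈ C, b < c ∧ c < a) → a ∈ C)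

/-- `X ⊆ ω₁` is stationary: it meets every club. -/
def IsStationarySet (X : Set Omega1) : Prop :=
  ∀ C : Set Omega1, IsClubIn C → (X ∩ C).Nonempty

/-- The diamond-plus principle `◊⁺` on `ω₁`. -/
def DiamondPlus : Prop :=
  ∃ A : Omega1 → Set (Set Omega1),
    (∀ α, (A α).Countable) ∧
    ∀ X : Set Omega1, ∃ C : Set Omega1, IsClubIn C ∧
      ∀ α ∈ C, (C ∩ {b | b < α}) ∈ A α ∧ (X ∩ {b | b < α}) ∈ A α

/-! ### Completeness -/

/-- `A ⊆ 2^{ω₁}` is `Π¹₁`-complete. -/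
def IsPi11Complete (A : Set (Omega1 → Bool)) : Prop :=
  IsPi11 (gbsTop Omega1 Bool) A ∧
  ∀ S : Set (Omega1 → Bool), IsPi11 (gbsTop Omega1 Bool) S →
    ∃ π : (Omega1 → Bool) → Omega1 → Bool,
      @Continuous _ _ (gbsTop Omega1 Bool) (gbsTop Omega1 Bool) π ∧
      ∀ x, x ∈ S ↔ π x ∈ A

/-- `A ⊆ 2^{ω₁}` is `Σ¹₁`-complete. -/
def IsSigma11Complete (A : Set (Omega1 → Bool)) : Prop :=
  IsSigma11 (gbsTop Omega1 Bool) A ∧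
  ∀ S : Set (Omega1 → Bool), IsSigma11 (gbsTop Omega1 Bool) S →
    ∃ π : (Omega1 → Bool) → Omega1 → Bool,
      @Continuous _ _ (gbsTop Omega1 Bool) (gbsTop Omega1 Bool) π ∧
      ∀ x, x ∈ S ↔ π x ∈ A

/-- The set of codes of stationary subsets of `ω₁`, as a subset of `2^{ω₁}`. -/
def StatCodes : Set (Omega1 → Bool) := {x | IsStationarySet {a | x a = true}}


/-! The tree axioms are `ℵ₁`-fold Boolean combinations of the open conditions
`codedRel x a b`, except for the well-foundedness of the predecessor sets and the conditions
on the levels. Both are expressed through the rank stages `RankLE r o c` (every `r`-predecessor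
of `c` lies in an earlier stage), defined by recursion on `o`: for `o ≤ ω₁` each stage is an
`ℵ₁`-fold Boolean combination of earlier ones, so it is `ω₁`-Borel in the code by induction,
and when `r` is a tree order, `RankLE r o c` says that `c` has height at most `o`.
Finally, since `ω₁` is regular, a level is countable iff it is bounded in `ω₁`. -/

open Cardinal

universe u

namespace IsOmega1Borel

variable {β : Type} {t : TopologicalSpace β}

theorem empty : IsOmega1Borel t ∅ := basic _ (@isOpen_empty _ t)

theorem univ : IsOmega1Borel t Set.univ := basic _ (@isOpen_univ _ t)

theorem iUnion_of_mk_le {ι : Type u} (hι : #ι ≤ ℵ₁) {f : ι → Set β}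
    (hf : ∀ i, IsOmega1Borel t (f i)) : IsOmega1Borel t (⋃ i, f i) := by
  obtain ⟨e⟩ : Nonempty (ι ↪ Omega1) := by
    rw [← lift_mk_le', mk_ord_toType]
    simpa [lift_aleph] using lift_le.{0}.2 hι
  rcases isEmpty_or_nonempty ι with _ | _
  · rw [Set.iUnion_of_empty]
    exact empty
  · rw [← (Function.invFun_surjective e.injective).iUnion_comp]
    exact iUnion _ fun j => hf _

theorem setOf_exists {ι : Type u} (hι : #ι ≤ ℵ₁) {p : ι → β → Prop}
    (hp : ∀ i, IsOmega1Borel t {x | p i x}) : IsOmega1Borel t {x | ∃ i, p i x} := by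
  rw [Set.ofPred_exists]
  exact iUnion_of_mk_le hι hp

theorem setOf_not {p : β → Prop} (hp : IsOmega1Borel t {x | p x}) :
    IsOmega1Borel t {x | ¬ p x} := by
  rw [← Set.compl_ofPred]
  exact compl _ hp

theorem setOf_forall {ι : Type u} (hι : #ι ≤ ℵ₁) {p : ι → β → Prop}
    (hp : ∀ i, IsOmega1Borel t {x | p i x}) : IsOmega1Borel t {x | ∀ i, p i x} := by
  simpa using setOf_not (setOf_exists hι fun i => setOf_not (hp i))

theorem setOf_exists_mem {ι : Type u} {s : Set ι} (hs : #s ≤ ℵ₁) {p : ι → β → Prop}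
    (hp : ∀ i ∈ s, IsOmega1Borel t {x | p i x}) : IsOmega1Borel t {x | ∃ i ∈ s, p i x} := by
  simpa using setOf_exists hs fun i : s => hp i i.2

theorem setOf_forall_mem {ι : Type u} {s : Set ι} (hs : #s ≤ ℵ₁) {p : ι → β → Prop}
    (hp : ∀ i ∈ s, IsOmega1Borel t {x | p i x}) : IsOmega1Borel t {x | ∀ i ∈ s, p i x} := by
  simpa using setOf_forall hs fun i : s => hp i i.2

theorem setOf_or {p q : β → Prop} (hp : IsOmega1Borel t {x | p x})
    (hq : IsOmega1Borel t {x | q x}) : IsOmega1Borel t {x | p x ∨ q x} := by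
  rw [Set.ofPred_or, Set.union_eq_iUnion]
  refine iUnion_of_mk_le (mk_le_aleph0.trans (aleph0_le_aleph 1)) fun b => ?_
  cases b <;> assumption

theorem setOf_and {p q : β → Prop} (hp : IsOmega1Borel t {x | p x})
    (hq : IsOmega1Borel t {x | q x}) : IsOmega1Borel t {x | p x ∧ q x} := by
  simpa [not_or] using setOf_not (setOf_or (setOf_not hp) (setOf_not hq))

theorem setOf_imp {p q : β → Prop} (hp : IsOmega1Borel t {x | p x})
    (hq : IsOmega1Borel t {x | q x}) : IsOmega1Borel t {x | p x → q x} := by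
  simpa [imp_iff_not_or] using setOf_or (setOf_not hp) hq

theorem setOf_const (p : Prop) : IsOmega1Borel t {_x | p} := by
  by_cases hp : p
  · simpa [hp] using univ
  · simpa [hp] using empty

end IsOmega1Borel

theorem mk_omega1 : #Omega1 = ℵ₁ := mk_ord_toType _

theorem mk_Iio_le_aleph_one {o : Ordinal.{0}} (ho : o ≤ omega1Ord) : #(Set.Iio o) ≤ ℵ₁ := by
  have : o.card ≤ ℵ₁ := by simpa using Ordinal.card_le_card ho
  simpa [mk_Iio_ordinal, lift_aleph] using lift_le.{1}.2 this

theorem isOpen_gbsTop_setOf_apply_eq {I X : Type} (i : I) (v : X) :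
    (gbsTop I X).IsOpen {x | x i = v} := by
  classical
  refine TopologicalSpace.GenerateOpen.basic _
    ⟨fun j => if j = i then some v else none, ?_, ?_⟩
  · refine (Set.countable_singleton i).mono fun j hj => ?_
    by_contra hji
    simp_all
  · ext x
    simp [gbsBasic]

theorem isOmega1Borel_setOf_codedRel (a b : Omega1) :
    IsOmega1Borel (gbsTop Omega1 Bool) {x | codedRel x a b} :=
  .basic _ (isOpen_gbsTop_setOf_apply_eq _ true)

section TreeOrder

variable {α : Type} {r : α → α → Prop}

theorem IsTreeOrder.isWellOrder (hr : IsTreeOrder r) (c : α) :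
    IsWellOrder {a // r a c} (fun a b => r a.1 b.1) where
  trichotomous a b hab hba :=
    Subtype.ext ((hr.pred_trichot a b c a.2 b.2).resolve_left hab |>.resolve_right hba)
  wf := by
    refine WellFounded.wellFounded_iff_has_min.2 fun S ⟨a, ha⟩ => ?_
    obtain ⟨_, ⟨m, hmS, rfl⟩, hleast⟩ := hr.pred_wellOrdered c (Subtype.val '' S)
      (by rintro _ ⟨b, -, rfl⟩; exact b.2) ⟨a, a, ha, rfl⟩
    refine ⟨m, hmS, fun b hbS hbm => ?_⟩
    rcases hleast b ⟨b, hbS, rfl⟩ with h | h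
    · exact hr.irrefl _ (h ▸ hbm)
    · exact hr.irrefl _ (hr.trans _ _ _ h hbm)

theorem IsTreeOrder.treeHeight_eq_type (hr : IsTreeOrder r) (c : α) :
    treeHeight r c = @Ordinal.type _ _ (hr.isWellOrder c) := by
  rw [treeHeight, dif_pos (hr.isWellOrder c)]

theorem IsTreeOrder.treeHeight_eq_typein (hr : IsTreeOrder r) {a c : α} (hac : r a c) :
    treeHeight r a = @Ordinal.typein _ _ (hr.isWellOrder c) ⟨a, hac⟩ := by
  have := hr.isWellOrder c
  have := hr.isWellOrder a
  rw [hr.treeHeight_eq_type a,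
    ← Ordinal.type_subrel (fun p q : {b // r b c} => r p.1 q.1) ⟨a, hac⟩]
  exact Ordinal.type_eq.2 ⟨⟨⟨fun p => ⟨⟨p.1, hr.trans _ _ _ p.2 hac⟩, p.2⟩,
    fun q => ⟨q.1.1, q.2⟩, fun _ => rfl, fun _ => rfl⟩, Iff.rfl⟩⟩

theorem IsTreeOrder.treeHeight_lt_treeHeight (hr : IsTreeOrder r) {a c : α} (hac : r a c) :
    treeHeight r a < treeHeight r c := by
  have := hr.isWellOrder c
  rw [hr.treeHeight_eq_typein hac, hr.treeHeight_eq_type c]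
  exact Ordinal.typein_lt_type _ _

theorem IsTreeOrder.exists_treeHeight_eq_of_lt (hr : IsTreeOrder r) {c : α} {o : Ordinal}
    (ho : o < treeHeight r c) : ∃ a, r a c ∧ treeHeight r a = o := by
  have := hr.isWellOrder c
  rw [hr.treeHeight_eq_type c] at ho
  obtain ⟨a, rfl⟩ := Ordinal.typein_surj _ ho
  exact ⟨a.1, a.2, hr.treeHeight_eq_typein a.2⟩

-- The dependent `∃ _ : o' < o` puts `o' < o` in scope for the termination proof.
def RankLE (r : α → α → Prop) (o : Ordinal.{0}) (c : α) : Prop :=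
  ∀ a, r a c → ∃ o', ∃ _ : o' < o, RankLE r o' a
termination_by o

theorem rankLE_iff {o : Ordinal.{0}} {c : α} :
    RankLE r o c ↔ ∀ a, r a c → ∃ o' < o, RankLE r o' a := by
  rw [RankLE]
  simp only [exists_prop]

theorem RankLE.acc {o : Ordinal.{0}} {c : α} (h : RankLE r o c) : Acc r c := by
  induction o using WellFoundedLT.induction generalizing c with
  | _ o ih =>
    refine ⟨c, fun a hac => ?_⟩
    obtain ⟨o', ho', ha⟩ := rankLE_iff.1 h a hac
    exact ih o' ho' ha

theorem exists_min_of_forall_acc {S : Set α} (hS : ∀ a ∈ S, Acc r a) (hne : S.Nonempty) :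
    ∃ m ∈ S, ∀ a ∈ S, ¬ r a m := by
  by_contra! hmin
  obtain ⟨a, ha⟩ := hne
  induction hS a ha with
  | intro a _ ih =>
    obtain ⟨b, hb, hba⟩ := hmin a ha
    exact ih b hba hb

theorem IsTreeOrder.rankLE_iff_treeHeight_le (hr : IsTreeOrder r) {o : Ordinal.{0}} {c : α} :
    RankLE r o c ↔ treeHeight r c ≤ o := by
  induction o using WellFoundedLT.induction generalizing c with
  | _ o ih =>
    rw [rankLE_iff]
    constructor
    · intro h
      by_contra! hlt
      obtain ⟨a, hac, rfl⟩ := hr.exists_treeHeight_eq_of_lt hlt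
      obtain ⟨o', ho', ha⟩ := h a hac
      exact (ho'.trans_le ((ih o' ho').1 ha)).false
    · intro h a hac
      have ha := (hr.treeHeight_lt_treeHeight hac).trans_le h
      exact ⟨_, ha, (ih _ ha).2 le_rfl⟩

theorem IsTreeOrder.of_forall_rankLE
    (htrans : ∀ a b c, r a b → r b c → r a c) (hirrefl : ∀ a, ¬ r a a)
    (htri : ∀ a b c, r a c → r b c → r a b ∨ a = b ∨ r b a)
    (hrank : ∀ c, ∃ o, RankLE r o c) : IsTreeOrder r where
  trans := htrans
  irrefl := hirrefl
  pred_trichot := htri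
  pred_wellOrdered c S hS hne := by
    obtain ⟨o, hc⟩ := hrank c
    have hacc : ∀ a ∈ S, Acc r a := fun a ha => hc.acc.inv (hS a ha)
    obtain ⟨m, hm, hmin⟩ := exists_min_of_forall_acc hacc hne
    refine ⟨m, hm, fun a ha => ?_⟩
    rcases htri m a c (hS m hm) (hS a ha) with h | h | h
    exacts [Or.inr h, Or.inl h, (hmin a ha h).elim]

def RankEq (r : α → α → Prop) (o : Ordinal.{0}) (c : α) : Prop :=
  RankLE r o c ∧ ∀ o' < o, ¬ RankLE r o' c

theorem IsTreeOrder.rankEq_iff_treeHeight_eq (hr : IsTreeOrder r) {o : Ordinal.{0}} {c : α} :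
    RankEq r o c ↔ treeHeight r c = o := by
  simp only [RankEq, hr.rankLE_iff_treeHeight_le, not_le]
  exact ⟨fun h => h.1.antisymm (not_lt.1 fun hlt => (h.2 _ hlt).false),
    fun h => ⟨h.le, fun _ => h ▸ id⟩⟩

end TreeOrder

theorem Omega1.countable_iff_bddAbove {S : Set Omega1} : S.Countable ↔ BddAbove S := by
  constructor
  · intro hS
    by_contra hunb
    have hcof : Order.cof Omega1 ≤ #S :=
      Order.cof_le fun a => (not_bddAbove_iff.1 hunb a).imp fun _ h => ⟨h.1, h.2.le⟩
    rw [Ordinal.cof_toType, isRegular_aleph_one.cof_ord] at hcof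
    exact aleph0_lt_aleph_one.not_ge (hcof.trans hS.le_aleph0)
  · rintro ⟨b, hb⟩
    have hIio : (Set.Iio b).Countable :=
      le_aleph0_iff_set_countable.1 (lt_aleph_one_iff.1 (mk_omega1 ▸ mk_Iio_lt b (by simp)))
    exact (Set.Iio_insert (a := b) ▸ hIio.insert b).mono hb

section Aleph1Tree

variable {r : Omega1 → Omega1 → Prop}

theorem IsAleph1Tree.treeHeight_lt (h : IsAleph1Tree r) (c : Omega1) :
    treeHeight r c < omega1Ord := by
  by_contra! hge
  exact Set.notMem_empty c (h.level_empty_of_ge _ hge ▸ rfl)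

theorem IsTreeOrder.treeLevel_eq (hr : IsTreeOrder r) (o : Ordinal.{0}) :
    treeLevel r o = {c | RankEq r o c} :=
  Set.ext fun _ => hr.rankEq_iff_treeHeight_eq.symm

theorem IsTreeOrder.isAleph1Tree_iff (hr : IsTreeOrder r)
    (hheight : ∀ c, treeHeight r c < omega1Ord) :
    IsAleph1Tree r ↔
      ∀ o < omega1Ord, BddAbove (treeLevel r o) ∧ (treeLevel r o).Nonempty := by
  have hempty (o) (ho : omega1Ord ≤ o) : treeLevel r o = ∅ :=
    Set.eq_empty_of_forall_notMem fun c hc => ((hheight c).trans_le ho).ne hc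
  constructor
  · exact fun h o ho =>
      ⟨Omega1.countable_iff_bddAbove.1 (h.level_countable o), h.level_nonempty o ho⟩
  · intro h
    refine ⟨hr, fun o => ?_, fun o ho => (h o ho).2, hempty⟩
    rcases lt_or_ge o omega1Ord with ho | ho
    · exact Omega1.countable_iff_bddAbove.2 (h o ho).1
    · simp [hempty o ho]

theorem isAleph1Tree_iff : IsAleph1Tree r ↔
    (∀ a b c, r a b → r b c → r a c) ∧ (∀ a, ¬ r a a) ∧
    (∀ a b c, r a c → r b c → r a b ∨ a = b ∨ r b a) ∧
    (∀ c, ∃ o < omega1Ord, RankLE r o c) ∧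
    ∀ o < omega1Ord, (∃ b, ∀ c, RankEq r o c → c ≤ b) ∧ ∃ c, RankEq r o c := by
  constructor
  · intro h
    have hr := h.toIsTreeOrder
    refine ⟨hr.trans, hr.irrefl, hr.pred_trichot,
      fun c => ⟨_, h.treeHeight_lt c, hr.rankLE_iff_treeHeight_le.2 le_rfl⟩, ?_⟩
    simpa [hr.treeLevel_eq, bddAbove_def, Set.nonempty_def] using
      (hr.isAleph1Tree_iff h.treeHeight_lt).1 h
  · rintro ⟨htrans, hirrefl, htri, hrank, hlevels⟩
    have hr := IsTreeOrder.of_forall_rankLE htrans hirrefl htri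
      fun c => (hrank c).imp fun _ => And.right
    have hheight (c) : treeHeight r c < omega1Ord :=
      let ⟨_, ho, hc⟩ := hrank c
      (hr.rankLE_iff_treeHeight_le.1 hc).trans_lt ho
    refine (hr.isAleph1Tree_iff hheight).2 ?_
    simpa [hr.treeLevel_eq, bddAbove_def, Set.nonempty_def] using hlevels

end Aleph1Tree

theorem isOmega1Borel_setOf_rankLE {o : Ordinal.{0}} (ho : o ≤ omega1Ord) (c : Omega1) :
    IsOmega1Borel (gbsTop Omega1 Bool) {x | RankLE (codedRel x) o c} := by
  induction o using WellFoundedLT.induction generalizing c with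
  | _ o ih =>
    simp only [rankLE_iff (o := o) (c := c)]
    exact .setOf_forall mk_omega1.le fun a => .setOf_imp (isOmega1Borel_setOf_codedRel a c)
      (.setOf_exists_mem (mk_Iio_le_aleph_one ho) fun o' ho' => ih o' ho' (ho'.le.trans ho) a)

theorem isOmega1Borel_setOf_rankEq {o : Ordinal.{0}} (ho : o ≤ omega1Ord) (c : Omega1) :
    IsOmega1Borel (gbsTop Omega1 Bool) {x | RankEq (codedRel x) o c} :=
  .setOf_and (isOmega1Borel_setOf_rankLE ho c) (.setOf_forall_mem (mk_Iio_le_aleph_one ho)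
    fun _ ho' => .setOf_not (isOmega1Borel_setOf_rankLE (ho'.le.trans ho) c))

/-- The set of codes of `ℵ₁`-trees on `ω₁` is an `ω₁`-Borel subset of `2^{ω₁}`. -/
theorem statement_0 :
    IsOmega1Borel (gbsTop Omega1 Bool)
      {x : Omega1 → Bool | IsAleph1Tree (codedRel x)} := by
  have hΩ : #Omega1 ≤ ℵ₁ := mk_omega1.le
  have hω₁ : #(Set.Iio omega1Ord) ≤ ℵ₁ := mk_Iio_le_aleph_one le_rfl
  have hrel := isOmega1Borel_setOf_codedRel
  simp only [isAleph1Tree_iff]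
  refine .setOf_and ?trans (.setOf_and ?irrefl (.setOf_and ?trichot (.setOf_and ?height ?levels)))
  case trans =>
    exact .setOf_forall hΩ fun a => .setOf_forall hΩ fun b => .setOf_forall hΩ fun c =>
      .setOf_imp (hrel a b) (.setOf_imp (hrel b c) (hrel a c))
  case irrefl => exact .setOf_forall hΩ fun a => .setOf_not (hrel a a)
  case trichot =>
    exact .setOf_forall hΩ fun a => .setOf_forall hΩ fun b => .setOf_forall hΩ fun c =>
      .setOf_imp (hrel a c) (.setOf_imp (hrel b c)
        (.setOf_or (hrel a b) (.setOf_or (.setOf_const _) (hrel b a))))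
  case height =>
    exact .setOf_forall hΩ fun c =>
      .setOf_exists_mem hω₁ fun o ho => isOmega1Borel_setOf_rankLE ho.le c
  case levels =>
    exact .setOf_forall_mem hω₁ fun o ho => .setOf_and
      (.setOf_exists hΩ fun b => .setOf_forall hΩ fun c =>
        .setOf_imp (isOmega1Borel_setOf_rankEq ho.le c) (.setOf_const _))
      (.setOf_exists hΩ fun c => isOmega1Borel_setOf_rankEq ho.le c)

end
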